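/- Let T be a (possibly unbounded) self-adjoint operator on a complex Hilbert space which is boundedly invertible, and suppose d₊ := dist(0, σ(T) ∩ (0,∞)) > 0 and d₋ := dist(0, σ(T) ∩ (−∞,0)) > 0. Let V be a bounded self-adjoint operator with ‖V‖ ≤ 1 and let β ∈ ℝ satisfy |β| < √(d₊ d₋). Then T + iβV (with domain dom(T)) is continuously invertible, i.e., it is a bijection from dom(T) onto the whole Hilbert space with bounded inverse. -/

import Mathlib

/-!
Common setup: the Hilbert space `ℓ²(ℕ, K)`, block Jacobi operators on their maximal
domain, resolvents, spectrum and essential spectrum of (possibly unbounded) operators,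
and the scalar auxiliary functions of the paper.
-/

noncomputable section

open scoped ENNReal

namespace BlockJacobi

variable {K : Type*} [NormedAddCommGroup K] [InnerProductSpace ℂ K] [CompleteSpace K]

/-- The Hilbert space `ℓ²(ℕ, K)`. -/
abbrev H (K : Type*) [NormedAddCommGroup K] [InnerProductSpace ℂ K] : Type _ :=
  lp (fun _ : ℕ => K) 2

/-- The formal action of the block Jacobi matrix (0-indexed):
`(J u)₀ = B₀ u₀ + A₀ u₁` and `(J u)ₙ₊₁ = Aₙ* uₙ + Bₙ₊₁ uₙ₊₁ + Aₙ₊₁ uₙ₊₂`. -/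
def jacobiAct (A B : ℕ → K →L[ℂ] K) (u : ℕ → K) : ℕ → K
  | 0 => B 0 (u 0) + A 0 (u 1)
  | (n + 1) =>
      (ContinuousLinearMap.adjoint (A n)) (u n) + B (n + 1) (u (n + 1)) + A (n + 1) (u (n + 2))

/-- `J` is the block Jacobi operator with entries `A`, `B`, defined on the maximal domain. -/
structure IsJacobiOp (A B : ℕ → K →L[ℂ] K) (J : H K →ₗ.[ℂ] H K) : Prop where
  mem_domain_iff : ∀ u : H K, u ∈ J.domain ↔ Memℓp (jacobiAct A B u) 2
  apply_eq : ∀ u : J.domain, ∀ n, (J u : ∀ _ : ℕ, K) n = jacobiAct A B (u : H K) n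

/-- `R` is the (bounded, everywhere defined, two-sided) inverse of `T - ζ`; in other words,
`ζ` belongs to the resolvent set of `T` and `R` is the resolvent of `T` at `ζ`. -/
def IsResolventAt {E : Type*} [NormedAddCommGroup E] [InnerProductSpace ℂ E]
    (T : E →ₗ.[ℂ] E) (ζ : ℂ) (R : E →L[ℂ] E) : Prop :=
  (∀ u : E, ∃ h : R u ∈ T.domain, T ⟨R u, h⟩ - ζ • R u = u) ∧
    (∀ v : T.domain, R (T v - ζ • (v : E)) = (v : E))

/-- The spectrum of a (possibly unbounded) operator `T`: the set of `ζ : ℂ` at which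
no bounded resolvent exists. -/
def pSpectrum {E : Type*} [NormedAddCommGroup E] [InnerProductSpace ℂ E]
    (T : E →ₗ.[ℂ] E) : Set ℂ :=
  {ζ | ¬ ∃ R : E →L[ℂ] E, IsResolventAt T ζ R}

/-- The eigenspace of `T` at `ζ`. -/
def eigenspace {E : Type*} [NormedAddCommGroup E] [InnerProductSpace ℂ E]
    (T : E →ₗ.[ℂ] E) (ζ : ℂ) : Submodule ℂ E where
  carrier := {x | ∃ hx : x ∈ T.domain, T ⟨x, hx⟩ = ζ • x}
  zero_mem' := ⟨T.domain.zero_mem, by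
    have : (⟨(0 : E), T.domain.zero_mem⟩ : T.domain) = 0 := rfl
    rw [this, LinearPMap.map_zero, smul_zero]⟩
  add_mem' := by
    rintro x y ⟨hx, hTx⟩ ⟨hy, hTy⟩
    refine ⟨T.domain.add_mem hx hy, ?_⟩
    have : (⟨x + y, T.domain.add_mem hx hy⟩ : T.domain) = ⟨x, hx⟩ + ⟨y, hy⟩ := rfl
    rw [this, LinearPMap.map_add, hTx, hTy, smul_add]
  smul_mem' := by
    rintro c x ⟨hx, hTx⟩
    refine ⟨T.domain.smul_mem c hx, ?_⟩
    have : (⟨c • x, T.domain.smul_mem c hx⟩ : T.domain) = c • ⟨x, hx⟩ := rfl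
    rw [this, LinearPMap.map_smul, hTx, smul_comm]

/-- `ζ` is an eigenvalue of `T`. -/
def IsEigenvalue {E : Type*} [NormedAddCommGroup E] [InnerProductSpace ℂ E]
    (T : E →ₗ.[ℂ] E) (ζ : ℂ) : Prop :=
  eigenspace T ζ ≠ ⊥

/-- The essential spectrum of `T`: the spectrum with the isolated eigenvalues of finite
multiplicity removed. -/
def essSpectrum {E : Type*} [NormedAddCommGroup E] [InnerProductSpace ℂ E]
    (T : E →ₗ.[ℂ] E) : Set ℂ :=
  {ζ ∈ pSpectrum T |
    ¬ ((∃ ε > (0 : ℝ), Metric.ball ζ ε ∩ pSpectrum T ⊆ {ζ}) ∧ IsEigenvalue T ζ ∧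
        FiniteDimensional ℂ (eigenspace T ζ))}

/-- The sum of an unbounded operator `T` and a bounded, everywhere defined operator `W`,
defined on the domain of `T`. -/
def addBounded {E : Type*} [NormedAddCommGroup E] [InnerProductSpace ℂ E]
    (T : E →ₗ.[ℂ] E) (W : E →L[ℂ] E) : E →ₗ.[ℂ] E where
  domain := T.domain
  toFun := T.toFun + (W.toLinearMap.comp T.domain.subtype)

/-- The canonical isometric embedding of `K` onto the `k`-th coordinate of `ℓ²(ℕ, K)`. -/
def singleCLM (k : ℕ) : K →L[ℂ] H K :=
  LinearMap.mkContinuous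
    { toFun := fun v => lp.single 2 k v
      map_add' := fun v w => by
        apply lp.ext
        funext j
        by_cases h : j = k
        · subst h; simp [lp.single_apply_self]
        · simp [lp.single_apply_ne _ _ _ h]
      map_smul' := fun c v => by simp }
    1 (fun v => by
      rw [one_mul]
      exact le_of_eq (lp.norm_single (E := fun _ : ℕ => K) (p := 2) (by norm_num) k v))

/-- The evaluation of an element of `ℓ²(ℕ, K)` at the `j`-th coordinate. -/
def projCLM (j : ℕ) : H K →L[ℂ] K :=
  LinearMap.mkContinuous
    { toFun := fun u => u j
      map_add' := fun u v => by simp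
      map_smul' := fun c u => by simp }
    1 (fun u => by
      rw [one_mul]
      exact lp.norm_apply_le_norm two_ne_zero u j)

/-- The `(j,k)` entry of the block Green matrix, regarded as a bounded operator on `K`,
expressed through the resolvent `R` of `J` at `ζ`. -/
def green (R : H K →L[ℂ] H K) (j k : ℕ) : K →L[ℂ] K :=
  (projCLM j) ∘L R ∘L (singleCLM k)

/-- The family `{Aₘ, Bₘ, Aₘ* : m ∈ ℕ}` of the entries of a block Jacobi matrix. -/
def jacobiFamily (A B : ℕ → K →L[ℂ] K) : Set (K →L[ℂ] K) :=
  {T | ∃ m, T = A m ∨ T = B m ∨ T = ContinuousLinearMap.adjoint (A m)}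

/-- `|T| = (T* T)^{1/2}`, via the continuous functional calculus. -/
def opAbs (T : K →L[ℂ] K) : K →L[ℂ] K :=
  cfc Real.sqrt (ContinuousLinearMap.adjoint T * T)

/-- The essential spectrum of a bounded operator: the spectrum with the isolated
eigenvalues of finite multiplicity removed. -/
def essSpectrumBdd {E : Type*} [NormedAddCommGroup E] [NormedSpace ℂ E] [CompleteSpace E]
    (T : E →L[ℂ] E) : Set ℂ :=
  {ζ ∈ spectrum ℂ T |
    ¬ ((∃ ε > (0 : ℝ), Metric.ball ζ ε ∩ spectrum ℂ T ⊆ {ζ}) ∧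
        Module.End.eigenspace (↑T : E →ₗ[ℂ] E) ζ ≠ ⊥ ∧
        FiniteDimensional ℂ (Module.End.eigenspace (↑T : E →ₗ[ℂ] E) ζ))}

/-! Scalar auxiliary functions. -/

/-- `ψ(x) = x² eˣ`. -/
def psi (x : ℝ) : ℝ := x ^ 2 * Real.exp x

/-- `ψ̃(x) = x eˣ`. -/
def psit (x : ℝ) : ℝ := x * Real.exp x

/-- The inverse of `ψ`, a strictly increasing bijection of `(0, ∞)` onto itself. -/
def psiInv (y : ℝ) : ℝ := sSup {x : ℝ | 0 ≤ x ∧ psi x ≤ y}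

/-- The inverse of `ψ̃`, a strictly increasing bijection of `(0, ∞)` onto itself. -/
def psitInv (y : ℝ) : ℝ := sSup {x : ℝ | 0 ≤ x ∧ psit x ≤ y}

/-- `φ_δ`, the regularized reciprocal. -/
def phiDelta (δ x : ℝ) : ℝ := if x < δ then 1 / δ else 1 / x

/-- `w(x) = √((x − r)(s − x))`. -/
def w (r s x : ℝ) : ℝ := Real.sqrt ((x - r) * (s - x))

/-- The decay exponent `γ(ζ)` of Theorem 3.2. -/
def gam (r s δ ε η : ℝ) (ζ : ℂ) : ℝ :=
  if |ζ.im| ≤ w r s ζ.re * ε / 2 then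
    min (δ * psiInv (w r s ζ.re ^ 2 * ε / (2 * δ * (s - r))))
      (δ * psitInv (w r s ζ.re * (1 - 2 * ε) / (2 * δ)))
  else δ * psitInv (w r s ζ.re * ε * (1 - η) / (4 * δ))

/-!
Let `R₀ = T⁻¹`. The gap hypotheses give `a, b > 0` with `β² < a b` and `σ(R₀) ⊆ [-1/b, 1/a]`.
Since `T + iβV = (1 + iβ V R₀) T`, it suffices to invert `1 + iβ V R₀`. With `c = (a - b)/2` and
`m = (a + b)/2` this factors as `(1 + (c + iβV) G) (1 - c R₀)`, where `G = R₀ (1 - c R₀)⁻¹` is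
`(T - c)⁻¹`. The functional calculus bounds `‖G‖ ≤ 1/m`, while
`‖c + iβV‖² ≤ c² + β² < c² + a b = m²`, so the first factor is a Neumann-series unit.
-/

theorem exists_pos_lt_mul_of_ofReal_lt_mul {x : ℝ} {e₁ e₂ : ℝ≥0∞}
    (h : ENNReal.ofReal x < e₁ * e₂) :
    ∃ a b : ℝ, 0 < a ∧ 0 < b ∧ ENNReal.ofReal a ≤ e₁ ∧ ENNReal.ofReal b ≤ e₂ ∧ x < a * b := by
  obtain ⟨a, ha, b, hb, hab⟩ : ∃ a < e₁, ∃ b < e₂, ENNReal.ofReal x < a * b := by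
    by_contra! H
    exact h.not_ge (ENNReal.mul_le_of_forall_lt H)
  have ha₀ : a ≠ 0 := by rintro rfl; simp at hab
  have hb₀ : b ≠ 0 := by rintro rfl; simp at hab
  refine ⟨a.toReal, b.toReal, ENNReal.toReal_pos ha₀ ha.ne_top, ENNReal.toReal_pos hb₀ hb.ne_top,
    (ENNReal.ofReal_toReal ha.ne_top).trans_le ha.le,
    (ENNReal.ofReal_toReal hb.ne_top).trans_le hb.le, ?_⟩
  rw [← ENNReal.ofReal_toReal (ENNReal.mul_ne_top ha.ne_top hb.ne_top),
    ENNReal.ofReal_lt_ofReal_iff', ENNReal.toReal_mul] at hab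
  exact hab.1

theorem le_norm_of_ofReal_le_infEDist {F : Type*} [SeminormedAddCommGroup F] {S : Set F}
    {a : ℝ} {z : F} (h : ENNReal.ofReal a ≤ Metric.infEDist 0 S) (hz : z ∈ S) : a ≤ ‖z‖ := by
  have := h.trans (Metric.infEDist_le_edist_of_mem hz)
  rwa [edist_dist, dist_zero_left, ENNReal.ofReal_le_ofReal_iff (norm_nonneg z)] at this

theorem neg_one_le_mul_and_mul_le_one_of_mem_Icc {a b t : ℝ} (ha : 0 < a) (hb : 0 < b)
    (ht : t ∈ Set.Icc (-b⁻¹) a⁻¹) : -1 ≤ b * t ∧ a * t ≤ 1 :=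
  ⟨by simpa [hb.ne'] using mul_le_mul_of_nonneg_left ht.1 hb.le,
    by simpa [ha.ne'] using mul_le_mul_of_nonneg_left ht.2 ha.le⟩

theorem one_half_le_one_sub_mul_of_mem_Icc {a b t : ℝ} (ha : 0 < a) (hb : 0 < b)
    (ht : t ∈ Set.Icc (-b⁻¹) a⁻¹) : 1 / 2 ≤ 1 - (a - b) / 2 * t := by
  obtain ⟨hbt, hat⟩ := neg_one_le_mul_and_mul_le_one_of_mem_Icc ha hb ht
  rcases le_total 0 t with h | h <;> nlinarith

theorem mul_abs_le_one_sub_mul_of_mem_Icc {a b t : ℝ} (ha : 0 < a) (hb : 0 < b)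
    (ht : t ∈ Set.Icc (-b⁻¹) a⁻¹) : (a + b) / 2 * |t| ≤ 1 - (a - b) / 2 * t := by
  obtain ⟨hbt, hat⟩ := neg_one_le_mul_and_mul_le_one_of_mem_Icc ha hb ht
  rcases abs_cases t with ⟨h, -⟩ | ⟨h, -⟩ <;> rw [h] <;> linarith

section CStarAlgebra

variable {A : Type*} [CStarAlgebra A]

theorem norm_I_smul_add_algebraMap_sq_le {V : A} (hV : IsSelfAdjoint V) (β c : ℝ) :
    ‖(Complex.I * β) • V + algebraMap ℝ A c‖ ^ 2 ≤ c ^ 2 + β ^ 2 * ‖V‖ ^ 2 := by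
  obtain _ | _ := subsingleton_or_nontrivial A
  · rw [Subsingleton.elim ((Complex.I * β) • V + algebraMap ℝ A c) 0, norm_zero, sq, zero_mul]
    positivity
  have hstar : star ((Complex.I * β) • V + algebraMap ℝ A c) *
      ((Complex.I * β) • V + algebraMap ℝ A c) = algebraMap ℝ A (c ^ 2) + β ^ 2 • (V * V) := by
    simp only [Algebra.algebraMap_eq_smul_one, ← Complex.coe_smul, star_add, star_smul,
      hV.star_eq, star_one, add_mul, mul_add, one_mul, mul_one, smul_mul_assoc, mul_smul_comm,
      RCLike.star_def, map_mul, Complex.conj_I, Complex.conj_ofReal]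
    match_scalars <;> ring_nf
    simp
  calc ‖(Complex.I * β) • V + algebraMap ℝ A c‖ ^ 2
      = ‖algebraMap ℝ A (c ^ 2) + β ^ 2 • (V * V)‖ := by
        rw [sq, ← CStarRing.norm_star_mul_self, hstar]
    _ ≤ c ^ 2 + β ^ 2 * ‖V‖ ^ 2 := by
      refine (norm_add_le _ _).trans (add_le_add ?_ ?_)
      · rw [norm_algebraMap', Real.norm_of_nonneg (sq_nonneg c)]
      rw [norm_smul, Real.norm_of_nonneg (sq_nonneg β), sq ‖V‖]
      gcongr
      exact norm_mul_le V V

theorem isUnit_one_add_mul_of_spectrum_subset_Icc {R Y : A} (hR : IsSelfAdjoint R) {a b : ℝ}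
    (ha : 0 < a) (hb : 0 < b) (hspec : spectrum ℝ R ⊆ Set.Icc (-b⁻¹) a⁻¹)
    (hY : ‖Y + algebraMap ℝ A ((a - b) / 2)‖ < (a + b) / 2) : IsUnit (1 + Y * R) := by
  set c := (a - b) / 2
  set m := (a + b) / 2
  have hpos : ∀ t ∈ spectrum ℝ R, 0 < 1 - c * t := fun t ht =>
    one_half_pos.trans_le (one_half_le_one_sub_mul_of_mem_Icc ha hb (hspec ht))
  have hX : cfc (fun t => 1 - c * t) R = 1 - c • R := by
    rw [cfc_sub (fun _ => 1) (c * ·) R, cfc_const_one ℝ R, cfc_const_mul_id c R]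
  have hXunit : IsUnit (1 - c • R) :=
    hX ▸ (isUnit_cfc_iff _ R).2 fun t ht => (hpos t ht).ne'
  set G := cfc (fun t => t / (1 - c * t)) R
  have hGX : G * (1 - c • R) = R := by
    have hcont : ContinuousOn (fun t => t / (1 - c * t)) (spectrum ℝ R) :=
      continuousOn_id.div (by fun_prop) fun t ht => (hpos t ht).ne'
    rw [← hX, ← cfc_mul _ _ R hcont]
    conv_rhs => rw [← cfc_id' ℝ R]
    exact cfc_congr fun t ht => div_mul_cancel₀ t (hpos t ht).ne'
  have hG : ‖G‖ ≤ m⁻¹ := by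
    refine norm_cfc_le (by positivity) fun t ht => ?_
    rw [Real.norm_eq_abs, abs_div, abs_of_pos (hpos t ht), div_le_iff₀ (hpos t ht),
      inv_mul_eq_div, le_div_iff₀ (by positivity), mul_comm]
    exact mul_abs_le_one_sub_mul_of_mem_Icc ha hb (hspec ht)
  have hsmall : ‖(Y + algebraMap ℝ A c) * G‖ < 1 := calc
    _ ≤ ‖Y + algebraMap ℝ A c‖ * ‖G‖ := norm_mul_le _ _
    _ < m * m⁻¹ := mul_lt_mul_of_lt_of_le_of_nonneg_of_pos hY hG (norm_nonneg _) (by positivity)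
    _ = 1 := mul_inv_cancel₀ (by positivity)
  have hfact : 1 + Y * R = (1 + (Y + algebraMap ℝ A c) * G) * (1 - c • R) := by
    rw [add_mul, one_mul, mul_assoc, hGX, add_mul, ← Algebra.smul_def]; abel
  rw [hfact]
  simpa using (isUnit_one_sub_of_norm_lt_one (x := -((Y + algebraMap ℝ A c) * G))
    (by rwa [norm_neg])).mul hXunit

end CStarAlgebra

section Resolvent

variable {E : Type*} [NormedAddCommGroup E] [InnerProductSpace ℂ E] {T : E →ₗ.[ℂ] E}
  {R S W : E →L[ℂ] E}

theorem isResolventAt_zero_iff : IsResolventAt T 0 R ↔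
    (∀ u, ∃ h : R u ∈ T.domain, T ⟨R u, h⟩ = u) ∧ ∀ v : T.domain, R (T v) = v := by
  simp [IsResolventAt]

theorem IsResolventAt.sub_eq_smul_mul {ζ ξ : ℂ} (hR : IsResolventAt T ζ R)
    (hS : IsResolventAt T ξ S) : R - S = (ζ - ξ) • (R * S) := by
  have key : ∀ x (hx : x ∈ T.domain), R (T ⟨x, hx⟩ - ξ • x) = x + (ζ - ξ) • R x := by
    intro x hx
    rw [show T ⟨x, hx⟩ - ξ • x = (T ⟨x, hx⟩ - ζ • x) + (ζ - ξ) • x by module, map_add,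
      hR.2 ⟨x, hx⟩, map_smul]
  ext u
  obtain ⟨hx, hTx⟩ := hS.1 u
  have hRu := key (S u) hx
  rw [hTx] at hRu
  simp [hRu]

theorem IsResolventAt.isSelfAdjoint [CompleteSpace E] (hT : IsSelfAdjoint T)
    (hR : IsResolventAt T 0 R) : IsSelfAdjoint R := by
  have hform := LinearPMap.adjoint_isFormalAdjoint hT.dense_domain
  rw [LinearPMap.isSelfAdjoint_def.mp hT] at hform
  obtain ⟨hTR, -⟩ := isResolventAt_zero_iff.1 hR
  rw [ContinuousLinearMap.isSelfAdjoint_iff_isSymmetric]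
  intro u v
  obtain ⟨hu, hTu⟩ := hTR u
  obtain ⟨hv, hTv⟩ := hTR v
  simpa [hTu, hTv] using (hform ⟨R u, hu⟩ ⟨R v, hv⟩).symm

theorem IsResolventAt.inv_mem_pSpectrum [CompleteSpace E] (hR : IsResolventAt T 0 R) {z : ℂ}
    (hz : z ∈ spectrum ℂ R) (hz₀ : z ≠ 0) : z⁻¹ ∈ pSpectrum T := by
  rintro ⟨S, hS⟩
  have hRS := hR.sub_eq_smul_mul hS
  have hSR := hS.sub_eq_smul_mul hR
  refine spectrum.mem_iff.1 hz (isUnit_iff_exists.2 ⟨z⁻¹ • 1 + z⁻¹ ^ 2 • S, ?_, ?_⟩)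
  · linear_combination (norm := skip) (-z⁻¹) • hRS
    simp only [Algebra.algebraMap_eq_smul_one, sub_mul, mul_add, one_mul, mul_one,
      mul_smul_comm, smul_mul_assoc]
    match_scalars <;> field_simp <;> ring
  · linear_combination (norm := skip) (z⁻¹) • hSR
    simp only [Algebra.algebraMap_eq_smul_one, mul_sub, add_mul, one_mul, mul_one,
      mul_smul_comm, smul_mul_assoc]
    match_scalars <;> field_simp <;> ring

theorem IsResolventAt.addBounded (hR : IsResolventAt T 0 R) (hW : IsUnit (1 + W * R)) :
    IsResolventAt (addBounded T W) 0 (R * ↑hW.unit⁻¹) := by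
  obtain ⟨hTR, hRT⟩ := isResolventAt_zero_iff.1 hR
  set D : E →L[ℂ] E := ↑hW.unit⁻¹
  have hWD : ∀ u, (1 + W * R) (D u) = u := fun u => DFunLike.congr_fun hW.mul_val_inv u
  have hDW : ∀ u, D ((1 + W * R) u) = u := fun u => DFunLike.congr_fun hW.val_inv_mul u
  refine isResolventAt_zero_iff.2 ⟨fun u => ?_, fun (v : T.domain) => ?_⟩
  · obtain ⟨h, hTRu⟩ := hTR (D u)
    refine ⟨h, ?_⟩
    show T ⟨R (D u), h⟩ + W (R (D u)) = u
    simpa [hTRu] using hWD u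
  · have hv : T v + W v = (1 + W * R) (T v) := by simp [hRT]
    show R (D (T v + W v)) = v
    rw [hv, hDW, hRT]

theorem IsResolventAt.spectrum_subset_Icc [CompleteSpace E] (hR : IsResolventAt T 0 R)
    {a b : ℝ} (ha : 0 < a) (hb : 0 < b)
    (haT : ∀ μ : ℝ, 0 < μ → (μ : ℂ) ∈ pSpectrum T → a ≤ μ)
    (hbT : ∀ μ : ℝ, μ < 0 → (μ : ℂ) ∈ pSpectrum T → b ≤ -μ) :
    spectrum ℝ R ⊆ Set.Icc (-b⁻¹) a⁻¹ := by
  intro t ht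
  have hinv : t ≠ 0 → ((t⁻¹ : ℝ) : ℂ) ∈ pSpectrum T := fun ht₀ => by
    simpa using hR.inv_mem_pSpectrum (spectrum.algebraMap_mem ℂ ht) (by simpa using ht₀)
  rcases lt_trichotomy t 0 with h | rfl | h
  · have := hbT t⁻¹ (inv_lt_zero.2 h) (hinv h.ne)
    rw [← inv_neg] at this
    constructor
    · linarith [(le_inv_comm₀ hb (neg_pos.2 h)).1 this]
    · linarith [inv_pos.2 ha]
  · exact ⟨by simp [hb.le], by simp [ha.le]⟩
  · constructor
    · linarith [inv_pos.2 hb]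
    · exact (le_inv_comm₀ ha h).1 (haT t⁻¹ (inv_pos.2 h) (hinv h.ne'))

end Resolvent

theorem lemma_JNS_general {E : Type*} [NormedAddCommGroup E] [InnerProductSpace ℂ E] [CompleteSpace E]
    (T : E →ₗ.[ℂ] E) (hT : IsSelfAdjoint T)
    (hTinv : ∃ R₀ : E →L[ℂ] E, IsResolventAt T 0 R₀)
    (V : E →L[ℂ] E) (hV : IsSelfAdjoint V) (hV1 : ‖V‖ ≤ 1)
    (β : ℝ)
    (hβ : ENNReal.ofReal (β ^ 2) <
      EMetric.infEdist (0 : ℂ) (pSpectrum T ∩ {z : ℂ | 0 < z.re ∧ z.im = 0}) *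
        EMetric.infEdist (0 : ℂ) (pSpectrum T ∩ {z : ℂ | z.re < 0 ∧ z.im = 0})) :
    ∃ R : E →L[ℂ] E, IsResolventAt (addBounded T ((Complex.I * (β : ℂ)) • V)) 0 R := by
  obtain ⟨R₀, hR₀⟩ := hTinv
  obtain ⟨a, b, ha, hb, haT, hbT, hab⟩ := exists_pos_lt_mul_of_ofReal_lt_mul hβ
  have hspec : spectrum ℝ R₀ ⊆ Set.Icc (-b⁻¹) a⁻¹ :=
    hR₀.spectrum_subset_Icc ha hb
      (fun μ hμ hμT => by
        simpa [abs_of_pos hμ] using le_norm_of_ofReal_le_infEDist haT ⟨hμT, by simpa, by simp⟩)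
      (fun μ hμ hμT => by
        simpa [abs_of_neg hμ] using le_norm_of_ofReal_le_infEDist hbT ⟨hμT, by simpa, by simp⟩)
  have hW : ‖(Complex.I * β) • V + algebraMap ℝ (E →L[ℂ] E) ((a - b) / 2)‖ < (a + b) / 2 := by
    refine lt_of_pow_lt_pow_left₀ 2 (by positivity) ?_
    calc _ ≤ ((a - b) / 2) ^ 2 + β ^ 2 * ‖V‖ ^ 2 := norm_I_smul_add_algebraMap_sq_le hV _ _
      _ ≤ ((a - b) / 2) ^ 2 + β ^ 2 := by
        gcongr
        exact mul_le_of_le_one_right (sq_nonneg β) (pow_le_one₀ (norm_nonneg V) hV1)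
      _ < ((a + b) / 2) ^ 2 := by nlinarith
  exact ⟨_, hR₀.addBounded
    (isUnit_one_add_mul_of_spectrum_subset_Icc (hR₀.isSelfAdjoint hT) ha hb hspec hW)⟩

/-- **Lemma 3.1** (Janas–Naboko–Stolz type): if `T` is a boundedly invertible self-adjoint
operator whose spectrum stays at `ℝ`-distance `d₊ > 0` (resp. `d₋ > 0`) from `0` on the
positive (resp. negative) side, `V` is a self-adjoint contraction, and `|β| < √(d₊ d₋)`
(equivalently `β² < d₊ d₋`, with the distance to the empty set read as `+∞`), then
`T + iβV` is continuously invertible. -/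
theorem lemma_JNS {E : Type*} [NormedAddCommGroup E] [InnerProductSpace ℂ E] [CompleteSpace E]
    (T : E →ₗ.[ℂ] E) (hT : IsSelfAdjoint T)
    (hTinv : ∃ R₀ : E →L[ℂ] E, IsResolventAt T 0 R₀)
    (hdPlus : 0 < EMetric.infEdist (0 : ℂ) (pSpectrum T ∩ {z : ℂ | 0 < z.re ∧ z.im = 0}))
    (hdMinus : 0 < EMetric.infEdist (0 : ℂ) (pSpectrum T ∩ {z : ℂ | z.re < 0 ∧ z.im = 0}))
    (V : E →L[ℂ] E) (hV : IsSelfAdjoint V) (hV1 : ‖V‖ ≤ 1)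
    (β : ℝ)
    (hβ : ENNReal.ofReal (β ^ 2) <
      EMetric.infEdist (0 : ℂ) (pSpectrum T ∩ {z : ℂ | 0 < z.re ∧ z.im = 0}) *
        EMetric.infEdist (0 : ℂ) (pSpectrum T ∩ {z : ℂ | z.re < 0 ∧ z.im = 0})) :
    ∃ R : E →L[ℂ] E, IsResolventAt (addBounded T ((Complex.I * (β : ℂ)) • V)) 0 R :=
  lemma_JNS_general T hT hTinv V hV hV1 β hβ

end BlockJacobi
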